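/- arXiv:2105.09075 — 2 statements merged into one kernel-verified Lean document; each statement's English description precedes it below -/
import Mathlib

section
/- Weak duality with eigenvalue perturbation: let p* be the optimal value of min ⟨C,X⟩ subject to A(X)=b, B(X)=s, X ⪰ 0, L ≤ X ≤ U, l ≤ s ≤ u. Given any ỹ ∈ ℝᵐ, ṽ ∈ ℝ^q, S̃ ∈ S^n, define Z := C − A*ỹ − B*ṽ − S̃. If x̄ is an upper bound on the largest eigenvalue of an optimal solution X*, then p* ≥ bᵀỹ + F₁(S̃) + F₂(ṽ) + x̄·Σ_{λ∈λ(Z), λ<0} λ, where F₁(S) = inf{⟨S,W⟩ : L ≤ W ≤ U} and F₂(v) = inf{⟨v,ω⟩ : l ≤ ω ≤ u}. -/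
/-!
Weak duality: for the feasible `X*` with slack `s*`, the objective splits as
`⟨C, X*⟩ = bᵀỹ + ⟨S̃, X*⟩ + ṽᵀs* + ⟨Z, X*⟩`. The box constraints bound the two middle terms below
by `F₁(S̃)` and `F₂(ṽ)`. Writing `Z = U diag(λ) Uᵀ`, one has `⟨Z, X*⟩ = ∑ λᵢ (UᵀX*U)ᵢᵢ`, and
`0 ⪯ X* ⪯ x̄ I` confines each `(UᵀX*U)ᵢᵢ` to `[0, x̄]`, so the last term is at least `x̄ ∑_{λᵢ<0} λᵢ`.
-/

open Matrix
open scoped ComplexOrder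

section

variable {ι : Type*} [Fintype ι]

lemma sum_min_mul_le_dotProduct {s l u w : ι → ℝ} (hw : ∀ i, l i ≤ w i ∧ w i ≤ u i) :
    ∑ i, min (s i * l i) (s i * u i) ≤ s ⬝ᵥ w := by
  refine Finset.sum_le_sum fun i _ => ?_
  rcases le_total 0 (s i) with hs | hs
  · exact min_le_of_left_le (mul_le_mul_of_nonneg_left (hw i).1 hs)
  · exact min_le_of_right_le (mul_le_mul_of_nonpos_left (hw i).2 hs)

lemma sInf_dotProduct_box_le {s l u w : ι → ℝ} (hw : ∀ i, l i ≤ w i ∧ w i ≤ u i) :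
    sInf {r : ℝ | ∃ ω : ι → ℝ, (∀ i, l i ≤ ω i ∧ ω i ≤ u i) ∧ r = s ⬝ᵥ ω} ≤ s ⬝ᵥ w :=
  csInf_le ⟨_, by rintro _ ⟨ω, hω, rfl⟩; exact sum_min_mul_le_dotProduct hω⟩ ⟨w, hw, rfl⟩

lemma sInf_trace_transpose_mul_box_le {m n : Type*} [Fintype m] [Fintype n]
    {S L U W : Matrix m n ℝ} (hW : ∀ i j, L i j ≤ W i j ∧ W i j ≤ U i j) :
    sInf {r : ℝ | ∃ W' : Matrix m n ℝ,
      (∀ i j, L i j ≤ W' i j ∧ W' i j ≤ U i j) ∧ r = (Sᵀ * W').trace} ≤ (Sᵀ * W).trace := by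
  refine csInf_le ⟨∑ k, min (vec S k * vec L k) (vec S k * vec U k), ?_⟩ ⟨W, hW, rfl⟩
  rintro _ ⟨W', hW', rfl⟩
  rw [← vec_dotProduct_vec]
  exact sum_min_mul_le_dotProduct fun k => hW' k.2 k.1

lemma mul_sum_filter_neg_le_sum_mul {μ d : ι → ℝ} {c : ℝ} (hd : ∀ i, 0 ≤ d i ∧ d i ≤ c) :
    c * ∑ i ∈ Finset.univ.filter (fun i => μ i < 0), μ i ≤ ∑ i, μ i * d i := by
  rw [Finset.sum_filter, Finset.mul_sum]
  refine Finset.sum_le_sum fun i _ => ?_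
  split_ifs <;> nlinarith [hd i]

end

namespace Matrix

variable {n : Type*} {𝕜 : Type*} [RCLike 𝕜]

lemma diag_mem_Icc_of_posSemidef [DecidableEq n] {M : Matrix n n 𝕜} {c : 𝕜} (hM : M.PosSemidef)
    (hcM : (c • 1 - M).PosSemidef) (i : n) : 0 ≤ M i i ∧ M i i ≤ c :=
  ⟨hM.diag_nonneg, by simpa using hcM.diag_nonneg (i := i)⟩

variable [Fintype n] [DecidableEq n]

lemma unitary_conj_smul_one_sub {U : Matrix n n 𝕜} (hU : U ∈ unitaryGroup n 𝕜) (c : 𝕜)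
    (X : Matrix n n 𝕜) : star U * (c • 1 - X) * U = c • 1 - star U * X * U := by
  rw [mul_sub, sub_mul, mul_smul_comm, mul_one, smul_mul_assoc, (mem_unitaryGroup_iff').mp hU]

namespace IsHermitian

lemma posSemidef_smul_one_sub {X : Matrix n n 𝕜} (hX : X.IsHermitian) {c : ℝ}
    (hc : ∀ i, hX.eigenvalues i ≤ c) : ((c : 𝕜) • 1 - X).PosSemidef := by
  rw [posSemidef_iff_isHermitian_and_spectrum_nonneg]
  refine ⟨(isHermitian_one.smul (RCLike.conj_ofReal c)).sub hX, ?_⟩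
  rw [← Algebra.algebraMap_eq_smul_one, ← spectrum.singleton_sub_eq, hX.spectrum_eq_image_range]
  rintro _ ⟨_, rfl, _, ⟨_, ⟨i, rfl⟩, rfl⟩, rfl⟩
  show 0 ≤ (c : 𝕜) - hX.eigenvalues i
  exact_mod_cast sub_nonneg.mpr (hc i)

lemma trace_mul_eq_sum_eigenvalues_mul {Z : Matrix n n 𝕜} (hZ : Z.IsHermitian)
    (X : Matrix n n 𝕜) :
    (Z * X).trace = ∑ i, (hZ.eigenvalues i : 𝕜) *
      (star (hZ.eigenvectorUnitary : Matrix n n 𝕜) * X * hZ.eigenvectorUnitary) i i := by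
  conv_lhs => rw [hZ.spectral_theorem, Unitary.conjStarAlgAut_apply]
  rw [mul_assoc (_ * diagonal _), trace_mul_comm, ← mul_assoc]
  simp [trace, mul_diagonal, mul_comm]

lemma mul_sum_neg_eigenvalues_le_trace_mul {Z X : Matrix n n ℝ} (hZ : Z.IsHermitian)
    (hX : X.PosSemidef) {c : ℝ} (hXc : (c • 1 - X).PosSemidef) :
    c * ∑ i ∈ Finset.univ.filter (fun i => hZ.eigenvalues i < 0), hZ.eigenvalues i
      ≤ (Z * X).trace := by
  set U : Matrix n n ℝ := ↑hZ.eigenvectorUnitary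
  rw [hZ.trace_mul_eq_sum_eigenvalues_mul]
  refine mul_sum_filter_neg_le_sum_mul fun i => diag_mem_Icc_of_posSemidef ?_ ?_ i
  · exact hX.conjTranspose_mul_mul_same U
  · rw [← unitary_conj_smul_one_sub hZ.eigenvectorUnitary.2]
    exact hXc.conjTranspose_mul_mul_same U

end IsHermitian

end Matrix

theorem stmt5_general {n m q : ℕ}
    (C : Matrix (Fin n) (Fin n) ℝ)
    (A : Matrix (Fin n) (Fin n) ℝ →ₗ[ℝ] (Fin m → ℝ))
    (B : Matrix (Fin n) (Fin n) ℝ →ₗ[ℝ] (Fin q → ℝ))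
    (Astar : (Fin m → ℝ) →ₗ[ℝ] Matrix (Fin n) (Fin n) ℝ)
    (Bstar : (Fin q → ℝ) →ₗ[ℝ] Matrix (Fin n) (Fin n) ℝ)
    (hAadj : ∀ (y : Fin m → ℝ) (X : Matrix (Fin n) (Fin n) ℝ),
      A X ⬝ᵥ y = ((Astar y)ᵀ * X).trace)
    (hBadj : ∀ (v : Fin q → ℝ) (X : Matrix (Fin n) (Fin n) ℝ),
      B X ⬝ᵥ v = ((Bstar v)ᵀ * X).trace)
    (b : Fin m → ℝ) (L U : Matrix (Fin n) (Fin n) ℝ) (l u : Fin q → ℝ)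
    (Xstar : Matrix (Fin n) (Fin n) ℝ) (sstar : Fin q → ℝ)
    -- feasibility of the optimal solution Xstar
    (hfeasA : A Xstar = b) (hfeasB : B Xstar = sstar)
    (hfeasP : Xstar.PosSemidef)
    (hfeasBox : ∀ i j, L i j ≤ Xstar i j ∧ Xstar i j ≤ U i j)
    (hfeass : ∀ i, l i ≤ sstar i ∧ sstar i ≤ u i)
    -- upper bound on the largest eigenvalue of Xstar
    (xbar : ℝ) (hxbar : ∀ i, hfeasP.1.eigenvalues i ≤ xbar)
    -- dual data
    (ytilde : Fin m → ℝ) (vtilde : Fin q → ℝ)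
    (Stilde : Matrix (Fin n) (Fin n) ℝ)
    (hZ : (C - Astar ytilde - Bstar vtilde - Stilde).IsHermitian) :
    b ⬝ᵥ ytilde
      + sInf {r : ℝ | ∃ W : Matrix (Fin n) (Fin n) ℝ,
          (∀ i j, L i j ≤ W i j ∧ W i j ≤ U i j) ∧ r = (Stildeᵀ * W).trace}
      + sInf {r : ℝ | ∃ ω : Fin q → ℝ,
          (∀ i, l i ≤ ω i ∧ ω i ≤ u i) ∧ r = vtilde ⬝ᵥ ω}
      + xbar * ∑ i ∈ Finset.univ.filter (fun i => hZ.eigenvalues i < 0), hZ.eigenvalues i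
      ≤ (Cᵀ * Xstar).trace := by
  have hy : b ⬝ᵥ ytilde = ((Astar ytilde)ᵀ * Xstar).trace := by rw [← hfeasA, hAadj]
  have hv : vtilde ⬝ᵥ sstar = ((Bstar vtilde)ᵀ * Xstar).trace := by
    rw [dotProduct_comm, ← hfeasB, hBadj]
  have hsplit : (Cᵀ * Xstar).trace = ((Astar ytilde)ᵀ * Xstar).trace
      + ((Bstar vtilde)ᵀ * Xstar).trace + (Stildeᵀ * Xstar).trace
      + ((C - Astar ytilde - Bstar vtilde - Stilde) * Xstar).trace := by
    rw [← (conjTranspose_eq_transpose_of_trivial _).symm.trans hZ.eq]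
    simp only [transpose_sub, sub_mul, trace_sub]
    ring
  have hF₁ := sInf_trace_transpose_mul_box_le (S := Stilde) hfeasBox
  have hF₂ := sInf_dotProduct_box_le (s := vtilde) hfeass
  have hneg := hZ.mul_sum_neg_eigenvalues_le_trace_mul hfeasP
    (by simpa using hfeasP.1.posSemidef_smul_one_sub hxbar)
  linarith

theorem stmt5 {n m q : ℕ}
    (C : Matrix (Fin n) (Fin n) ℝ) (hC : C.IsSymm)
    (A : Matrix (Fin n) (Fin n) ℝ →ₗ[ℝ] (Fin m → ℝ))
    (B : Matrix (Fin n) (Fin n) ℝ →ₗ[ℝ] (Fin q → ℝ))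
    (Astar : (Fin m → ℝ) →ₗ[ℝ] Matrix (Fin n) (Fin n) ℝ)
    (Bstar : (Fin q → ℝ) →ₗ[ℝ] Matrix (Fin n) (Fin n) ℝ)
    (hAadj : ∀ (y : Fin m → ℝ) (X : Matrix (Fin n) (Fin n) ℝ),
      A X ⬝ᵥ y = ((Astar y)ᵀ * X).trace)
    (hBadj : ∀ (v : Fin q → ℝ) (X : Matrix (Fin n) (Fin n) ℝ),
      B X ⬝ᵥ v = ((Bstar v)ᵀ * X).trace)
    (b : Fin m → ℝ) (L U : Matrix (Fin n) (Fin n) ℝ) (l u : Fin q → ℝ)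
    (Xstar : Matrix (Fin n) (Fin n) ℝ) (sstar : Fin q → ℝ)
    -- feasibility of the optimal solution Xstar
    (hfeasA : A Xstar = b) (hfeasB : B Xstar = sstar)
    (hfeasP : Xstar.PosSemidef)
    (hfeasBox : ∀ i j, L i j ≤ Xstar i j ∧ Xstar i j ≤ U i j)
    (hfeass : ∀ i, l i ≤ sstar i ∧ sstar i ≤ u i)
    -- optimality of Xstar
    (hopt : ∀ (X' : Matrix (Fin n) (Fin n) ℝ) (s' : Fin q → ℝ),
      (A X' = b ∧ B X' = s' ∧ X'.PosSemidef ∧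
        (∀ i j, L i j ≤ X' i j ∧ X' i j ≤ U i j) ∧
        (∀ i, l i ≤ s' i ∧ s' i ≤ u i)) →
      (Cᵀ * Xstar).trace ≤ (Cᵀ * X').trace)
    -- upper bound on the largest eigenvalue of Xstar
    (xbar : ℝ) (hxbar : ∀ i, hfeasP.1.eigenvalues i ≤ xbar)
    -- dual data
    (ytilde : Fin m → ℝ) (vtilde : Fin q → ℝ)
    (Stilde : Matrix (Fin n) (Fin n) ℝ) (hStilde : Stilde.IsSymm)
    (hZ : (C - Astar ytilde - Bstar vtilde - Stilde).IsHermitian) :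
    b ⬝ᵥ ytilde
      + sInf {r : ℝ | ∃ W : Matrix (Fin n) (Fin n) ℝ,
          (∀ i j, L i j ≤ W i j ∧ W i j ≤ U i j) ∧ r = (Stildeᵀ * W).trace}
      + sInf {r : ℝ | ∃ ω : Fin q → ℝ,
          (∀ i, l i ≤ ω i ∧ ω i ≤ u i) ∧ r = vtilde ⬝ᵥ ω}
      + xbar * ∑ i ∈ Finset.univ.filter (fun i => hZ.eigenvalues i < 0), hZ.eigenvalues i
      ≤ (Cᵀ * Xstar).trace :=
  stmt5_general C A B Astar Bstar hAadj hBadj b L U l u Xstar sstar hfeasA hfeasB hfeasP hfeasBox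
    hfeass xbar hxbar ytilde vtilde Stilde hZ
end

section
/- The solution of the proximal step for S in the extended ADMM admits the closed form S = (1/σ)·P_{[L,U]}(σM) − M, where M ∈ S^n is given data: that is, S minimizes over S ∈ S^n the function −F₁(S) + (σ/2)‖M + S‖²_F with F₁(S) = inf{⟨S,W⟩ : L ≤ W ≤ U}. -/
/-!
Minimizing `W ↦ ⟨S, W⟩` over the box `[L, U]` decouples entrywise, so
`F₁(S) = ∑ᵢⱼ min (Sᵢⱼ Lᵢⱼ) (Sᵢⱼ Uᵢⱼ)` and the objective is a sum of scalar problems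
`φ(s) = σ/2 (m + s)² - min (s l) (s u)`. With `p = clip(σ m) ∈ [l, u]` and `t = p/σ - m`,
we have `min (s l) (s u) ≤ s p` for every `s`, with equality at `s = t` because `t` has the sign
of `p - σ m`. Hence `φ(s) ≥ σ/2 (m + s)² - s p ≥ σ/2 (m + t)² - t p = φ(t)`, the middle step
because `t` is the vertex of that parabola.
-/

open Matrix

lemma min_mul_le_mul_of_mem_Icc {l u w : ℝ} (s : ℝ) (hw : w ∈ Set.Icc l u) :
    min (s * l) (s * u) ≤ s * w := by
  rcases le_total 0 s with hs | hs
  · exact (min_le_left _ _).trans (mul_le_mul_of_nonneg_left hw.1 hs)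
  · exact (min_le_right _ _).trans (mul_le_mul_of_nonpos_left hw.2 hs)

theorem sInf_sum_mul_of_le_of_le {ι κ : Type*} [Fintype ι] [Fintype κ]
    (L U S : Matrix ι κ ℝ) (hLU : ∀ i j, L i j ≤ U i j) :
    sInf {r : ℝ | ∃ W : Matrix ι κ ℝ,
        (∀ i j, L i j ≤ W i j ∧ W i j ≤ U i j) ∧ r = ∑ i, ∑ j, S i j * W i j}
      = ∑ i, ∑ j, min (S i j * L i j) (S i j * U i j) := by
  refine IsLeast.csInf_eq ⟨⟨of fun i j => if 0 ≤ S i j then L i j else U i j, ?_, ?_⟩, ?_⟩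
  · intro i j
    simp only [of_apply]
    split_ifs
    exacts [⟨le_rfl, hLU i j⟩, ⟨hLU i j, le_rfl⟩]
  · refine Fintype.sum_congr _ _ fun i => Fintype.sum_congr _ _ fun j => ?_
    simp only [of_apply]
    split_ifs with hs
    · exact min_eq_left (mul_le_mul_of_nonneg_left (hLU i j) hs)
    · exact min_eq_right (mul_le_mul_of_nonpos_left (hLU i j) (not_le.mp hs).le)
  · rintro r ⟨W, hW, rfl⟩
    exact Finset.sum_le_sum fun i _ => Finset.sum_le_sum fun j _ =>
      min_mul_le_mul_of_mem_Icc _ (hW i j)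

section Clip

variable {σ l u : ℝ}

lemma clip_mem_Icc (hlu : l ≤ u) (x : ℝ) : max l (min u x) ∈ Set.Icc l u :=
  ⟨le_max_left _ _, max_le hlu (min_le_left _ _)⟩

lemma min_mul_eq_mul_clip (hσ : 0 < σ) (hlu : l ≤ u) (m : ℝ) :
    let t := σ⁻¹ * max l (min u (σ * m)) - m
    min (t * l) (t * u) = t * max l (min u (σ * m)) := by
  intro t
  have ht : t = σ⁻¹ * (max l (min u (σ * m)) - σ * m) := by
    simp only [t]; field_simp
  rcases le_total (σ * m) l with hl | hl
  · have hp : max l (min u (σ * m)) = l := max_eq_left ((min_le_right _ _).trans hl)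
    have ht0 : 0 ≤ t := by rw [ht, hp]; exact mul_nonneg (inv_pos.2 hσ).le (by linarith)
    rw [hp, min_eq_left (mul_le_mul_of_nonneg_left hlu ht0)]
  rcases le_total u (σ * m) with hu | hu
  · have hp : max l (min u (σ * m)) = u := by rw [min_eq_left hu, max_eq_right hlu]
    have ht0 : t ≤ 0 := by
      rw [ht, hp]; exact mul_nonpos_of_nonneg_of_nonpos (inv_pos.2 hσ).le (by linarith)
    rw [hp, min_eq_right (mul_le_mul_of_nonpos_left hlu ht0)]
  · have ht0 : t = 0 := by rw [ht, min_eq_right hu, max_eq_right hl, sub_self, mul_zero]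
    simp [ht0]

lemma sq_sub_min_mul_clip_le (hσ : 0 < σ) (hlu : l ≤ u) (m s : ℝ) :
    let t := σ⁻¹ * max l (min u (σ * m)) - m
    σ / 2 * (m + t) ^ 2 - min (t * l) (t * u)
      ≤ σ / 2 * (m + s) ^ 2 - min (s * l) (s * u) := by
  intro t
  set p := max l (min u (σ * m))
  have hvertex : σ / 2 * (m + s) ^ 2 - s * p
      = σ / 2 * (m + t) ^ 2 - t * p + σ / 2 * (s - t) ^ 2 := by
    simp only [t]; field_simp; ring
  calc σ / 2 * (m + t) ^ 2 - min (t * l) (t * u)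
      = σ / 2 * (m + t) ^ 2 - t * p := by rw [min_mul_eq_mul_clip hσ hlu m]
    _ ≤ σ / 2 * (m + s) ^ 2 - s * p := by rw [hvertex]; nlinarith [sq_nonneg (s - t)]
    _ ≤ σ / 2 * (m + s) ^ 2 - min (s * l) (s * u) := by
        linarith [min_mul_le_mul_of_mem_Icc s (clip_mem_Icc hlu (σ * m))]

end Clip

theorem stmt9_general {n : ℕ} (σ : ℝ) (hσ : 0 < σ)
    (M L U : Matrix (Fin n) (Fin n) ℝ)
    (hLU : ∀ i j, L i j ≤ U i j)
    (Sstar : Matrix (Fin n) (Fin n) ℝ)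
    (hSstar : Sstar = Matrix.of (fun i j => σ⁻¹ * max (L i j) (min (U i j) (σ * M i j)) - M i j)) :
    ∀ S : Matrix (Fin n) (Fin n) ℝ,
      -(sInf {r : ℝ | ∃ W : Matrix (Fin n) (Fin n) ℝ,
            (∀ i j, L i j ≤ W i j ∧ W i j ≤ U i j) ∧ r = ∑ i, ∑ j, Sstar i j * W i j})
          + σ / 2 * ∑ i, ∑ j, (M i j + Sstar i j) ^ 2
        ≤ -(sInf {r : ℝ | ∃ W : Matrix (Fin n) (Fin n) ℝ,
            (∀ i j, L i j ≤ W i j ∧ W i j ≤ U i j) ∧ r = ∑ i, ∑ j, S i j * W i j})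
          + σ / 2 * ∑ i, ∑ j, (M i j + S i j) ^ 2 := by
  intro S
  rw [sInf_sum_mul_of_le_of_le L U Sstar hLU, sInf_sum_mul_of_le_of_le L U S hLU]
  have hentry := Finset.sum_le_sum fun i (_ : i ∈ Finset.univ) =>
    Finset.sum_le_sum fun j (_ : j ∈ Finset.univ) =>
      sq_sub_min_mul_clip_le hσ (hLU i j) (M i j) (S i j)
  subst hSstar
  simp only [Finset.sum_sub_distrib, ← Finset.mul_sum, of_apply] at hentry ⊢
  linarith

theorem stmt9 {n : ℕ} (σ : ℝ) (hσ : 0 < σ)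
    (M L U : Matrix (Fin n) (Fin n) ℝ)
    (hM : M.IsSymm) (hL : L.IsSymm) (hU : U.IsSymm)
    (hLU : ∀ i j, L i j ≤ U i j)
    (Sstar : Matrix (Fin n) (Fin n) ℝ)
    (hSstar : Sstar = Matrix.of (fun i j => σ⁻¹ * max (L i j) (min (U i j) (σ * M i j)) - M i j)) :
    ∀ S : Matrix (Fin n) (Fin n) ℝ,
      -(sInf {r : ℝ | ∃ W : Matrix (Fin n) (Fin n) ℝ,
            (∀ i j, L i j ≤ W i j ∧ W i j ≤ U i j) ∧ r = ∑ i, ∑ j, Sstar i j * W i j})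
          + σ / 2 * ∑ i, ∑ j, (M i j + Sstar i j) ^ 2
        ≤ -(sInf {r : ℝ | ∃ W : Matrix (Fin n) (Fin n) ℝ,
            (∀ i j, L i j ≤ W i j ∧ W i j ≤ U i j) ∧ r = ∑ i, ∑ j, S i j * W i j})
          + σ / 2 * ∑ i, ∑ j, (M i j + S i j) ^ 2 :=
  stmt9_general σ hσ M L U hLU Sstar hSstar
end
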